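/- Let μ be a Borel probability measure on [0,1]. Then there exist a sequence (x_k)_{k∈ℕ} in [0,1] and a constant c > 0 (independent of N) such that for all integers N ≥ 2, the empirical measure ν_N = (1/N)Σ_{i=1}^N δ_{x_i} satisfies D*_N(μ; ν_N) ≤ c · log(N)/N. -/
import Mathlib


open MeasureTheory Set
open scoped ENNReal

/-- The empirical measure `ν_N = (1/N) ∑_{i=1}^N δ_{x_i}` of the first `N` terms of a
sequence in `[0,1] ⊆ ℝ`. -/
noncomputable def emp1 (N : ℕ) (x : ℕ → ℝ) : Measure ℝ :=
  (N : ℝ≥0∞)⁻¹ • ∑ i ∈ Finset.range N, Measure.dirac (x i)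

/-- The one-dimensional star-discrepancy
`D*(μ;ν) = sup_{0 ≤ b ≤ 1} |μ([0,b)) − ν([0,b))|`. -/
noncomputable def starDisc (μ ν : Measure ℝ) : ℝ :=
  ⨆ b : Icc (0 : ℝ) 1, |(μ (Ico 0 ↑b)).toReal - (ν (Ico 0 ↑b)).toReal|




/-- binary van der Corput sequence -/
noncomputable def vdc : ℕ → ℝ := fun i =>
  if h : i = 0 then 0 else (if i % 2 = 1 then 1/2 else 0) + vdc (i/2) / 2
decreasing_by exact Nat.div_lt_self (Nat.pos_of_ne_zero h) one_lt_two

lemma vdc_zero : vdc 0 = 0 := by rw [vdc]; simp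

lemma vdc_nonneg (i : ℕ) : 0 ≤ vdc i := by
  induction i using Nat.strong_induction_on with
  | _ i ih =>
    rw [vdc]
    split
    · exact le_refl _
    · rename_i h
      have := ih (i/2) (Nat.div_lt_self (Nat.pos_of_ne_zero h) one_lt_two)
      split <;> linarith

lemma vdc_lt_one (i : ℕ) : vdc i < 1 := by
  induction i using Nat.strong_induction_on with
  | _ i ih =>
    rw [vdc]
    split
    · norm_num
    · rename_i h
      have := ih (i/2) (Nat.div_lt_self (Nat.pos_of_ne_zero h) one_lt_two)
      split <;> linarith

lemma vdc_eq (i : ℕ) : vdc i = (if i % 2 = 1 then 1/2 else (0:ℝ)) + vdc (i/2) / 2 := by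
  rcases eq_or_ne i 0 with rfl | h
  · simp [vdc_zero]
  · rw [vdc]; simp [h]

lemma vdc_shift (a i : ℕ) (h : i < 2^a) :
    vdc (2^a + i) = vdc i + (1/2:ℝ)^(a+1) := by
  induction a generalizing i with
  | zero =>
    interval_cases i
    show vdc 1 = vdc 0 + (1/2:ℝ)^(0+1)
    rw [vdc_eq 1, vdc_zero]
    norm_num
  | succ a ih =>
    have h2 : (2^(a+1) + i) % 2 = i % 2 := by omega
    have h3 : (2^(a+1) + i) / 2 = 2^a + i/2 := by omega
    rw [vdc_eq (2^(a+1) + i), h2, h3, ih (i/2) (by omega), vdc_eq i]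
    ring

open scoped Classical in
noncomputable def vcount (N : ℕ) (α : ℝ) : ℕ :=
  ((Finset.range N).filter (fun i => vdc i < α)).card

lemma vcount_split (a r : ℕ) (hr : r ≤ 2^a) (α : ℝ) :
    vcount (2^a + r) α = vcount (2^a) α + vcount r (α - (1/2:ℝ)^(a+1)) := by
  classical
  unfold vcount
  rw [Finset.range_add, Finset.filter_union, Finset.card_union_of_disjoint, Finset.filter_map,
    Finset.card_map]
  · congr 1
    apply congrArg
    apply Finset.filter_congr
    intro i hi
    simp only [Function.comp, addLeftEmbedding_apply]
    rw [vdc_shift a i (lt_of_lt_of_le (Finset.mem_range.mp hi) hr)]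
    exact (lt_sub_iff_add_lt).symm
  · rw [Finset.disjoint_left]
    intro x hx hx'
    simp only [Finset.mem_filter, Finset.mem_range, Finset.mem_map,
      addLeftEmbedding_apply] at hx hx'
    obtain ⟨⟨i, hi, rfl⟩, -⟩ := hx'
    omega

lemma int_ceil_two_mul (y : ℝ) : ⌈2*y⌉ = ⌈y⌉ + ⌈y - 1/2⌉ := by
  have h1 : y ≤ (⌈y⌉:ℝ) := Int.le_ceil y
  have h2 : (⌈y⌉:ℝ) < y + 1 := Int.ceil_lt_add_one y
  rcases le_or_gt y ((⌈y⌉:ℝ) - 1/2) with h | h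
  · have e1 : ⌈y - 1/2⌉ = ⌈y⌉ - 1 := by
      rw [Int.ceil_eq_iff]
      constructor <;> push_cast <;> linarith
    have e2 : ⌈2*y⌉ = 2*⌈y⌉ - 1 := by
      rw [Int.ceil_eq_iff]
      constructor <;> push_cast <;> linarith
    omega
  · have e1 : ⌈y - 1/2⌉ = ⌈y⌉ := by
      rw [Int.ceil_eq_iff]
      constructor <;> push_cast <;> linarith
    have e2 : ⌈2*y⌉ = 2*⌈y⌉ := by
      rw [Int.ceil_eq_iff]
      constructor <;> push_cast <;> linarith
    omega

lemma nat_ceil_two_mul (y : ℝ) : ⌈2*y⌉₊ = ⌈y⌉₊ + ⌈y - 1/2⌉₊ := by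
  rcases le_or_gt y 0 with h | h
  · rw [Nat.ceil_eq_zero.mpr h, Nat.ceil_eq_zero.mpr (by linarith : 2*y ≤ 0),
      Nat.ceil_eq_zero.mpr (by linarith : y - 1/2 ≤ 0)]
  rcases le_or_gt y (1/2) with h' | h'
  · rw [Nat.ceil_eq_zero.mpr (by linarith : y - 1/2 ≤ 0),
      Nat.ceil_eq_iff (by norm_num : (1:ℕ) ≠ 0) |>.mpr (by constructor <;> push_cast <;> linarith),
      Nat.ceil_eq_iff (by norm_num : (1:ℕ) ≠ 0) |>.mpr (by constructor <;> push_cast <;> linarith)]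
  · have := int_ceil_two_mul y
    have c1 : (⌈2*y⌉₊:ℤ) = ⌈2*y⌉ := Int.natCast_ceil_eq_ceil (by linarith)
    have c2 : (⌈y⌉₊:ℤ) = ⌈y⌉ := Int.natCast_ceil_eq_ceil (by linarith)
    have c3 : (⌈y - 1/2⌉₊:ℤ) = ⌈y - 1/2⌉ := Int.natCast_ceil_eq_ceil (by linarith)
    omega

lemma vcount_pow (a : ℕ) (α : ℝ) :
    vcount (2^a) α = min (2^a) ⌈(2^a:ℝ) * α⌉₊ := by
  classical
  induction a generalizing α with
  | zero =>
    unfold vcount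
    rcases lt_or_ge 0 α with h | h
    · rw [Finset.filter_true_of_mem (by intro i hi; simp at hi; subst hi; simpa [vdc_zero])]
      simp only [Finset.card_range, pow_zero, one_mul]
      have : 1 ≤ ⌈α⌉₊ := Nat.ceil_pos.mpr h
      omega
    · rw [Finset.filter_false_of_mem (fun i hi => by simp at hi; subst hi; rw [vdc_zero]; exact not_lt.mpr h)]
      simp only [Finset.card_empty, pow_zero, one_mul]
      rw [Nat.ceil_eq_zero.mpr h]
      simp
  | succ a ih =>
    have h2 : 2^(a+1) = 2^a + 2^a := by ring
    rw [h2, vcount_split a (2^a) le_rfl α, ih, ih]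
    have hy : (2^a:ℝ) * (α - (1/2:ℝ)^(a+1)) = (2^a:ℝ)*α - 1/2 := by
      rw [mul_sub]
      congr 1
      rw [div_pow, one_pow, pow_succ]
      field_simp
    rw [hy]
    set y : ℝ := (2^a:ℝ)*α with hy'
    have h2y : (2:ℝ)^(a+1) * α = 2*y := by rw [hy']; ring
    rw [h2y, nat_ceil_two_mul y]
    have hBA : ⌈y - 1/2⌉₊ ≤ ⌈y⌉₊ := Nat.ceil_le_ceil (by linarith)
    have hAB : ⌈y⌉₊ ≤ ⌈y - 1/2⌉₊ + 1 := by
      rcases le_or_gt y (1/2) with h | h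
      · have : ⌈y⌉₊ ≤ 1 := Nat.ceil_le.mpr (by norm_num; linarith)
        omega
      · have h0 : (0:ℝ) ≤ y - 1/2 := by linarith
        calc ⌈y⌉₊ ≤ ⌈(y - 1/2) + 1⌉₊ := Nat.ceil_le_ceil (by linarith)
        _ = ⌈y - 1/2⌉₊ + 1 := Nat.ceil_add_one h0
    omega

lemma vcount_pow_err (a : ℕ) (α : ℝ) (h0 : 0 ≤ α) (h1 : α ≤ 1) :
    |(vcount (2^a) α : ℝ) - (2^a:ℝ) * α| ≤ 1 := by
  rw [vcount_pow]
  have hn : (0:ℝ) ≤ (2^a:ℝ) * α := by positivity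
  have hub : (⌈(2^a:ℝ)*α⌉₊:ℝ) < (2^a:ℝ)*α + 1 := Nat.ceil_lt_add_one hn
  rw [abs_le]
  rcases le_or_gt ⌈(2^a:ℝ)*α⌉₊ (2^a) with h | h
  · rw [min_eq_right h]
    constructor
    · linarith [Nat.le_ceil ((2^a:ℝ)*α)]
    · linarith
  · rw [min_eq_left h.le]
    have h3 : ((2^a:ℕ):ℝ) < (2^a:ℝ)*α := Nat.lt_ceil.mp h
    have h4 : (2^a:ℝ)*α ≤ (2^a:ℝ) := by nlinarith [pow_pos (by norm_num : (0:ℝ) < 2) a]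
    constructor
    · push_cast at h3 ⊢; linarith
    · push_cast at h3 ⊢; linarith

lemma vcount_zero (α : ℝ) : vcount 0 α = 0 := by simp [vcount]

lemma vcount_nonpos (N : ℕ) (α : ℝ) (h : α ≤ 0) : vcount N α = 0 := by
  classical
  unfold vcount
  rw [Finset.filter_false_of_mem (fun i _ => not_lt.mpr (h.trans (vdc_nonneg i)))]
  simp

lemma vcount_le (N : ℕ) (α : ℝ) : vcount N α ≤ N := by
  classical
  calc vcount N α ≤ (Finset.range N).card := Finset.card_filter_le _ _
  _ = N := Finset.card_range N

lemma vcount_err (N : ℕ) (α : ℝ) (h0 : 0 ≤ α) (h1 : α ≤ 1) :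
    |(vcount N α : ℝ) - N * α| ≤ 3/2 * (Nat.log2 N + 1) := by
  induction N using Nat.strong_induction_on generalizing α with
  | _ N ih =>
    rcases eq_or_ne N 0 with rfl | hN
    · rw [vcount_zero]
      simp
      norm_num
    set a := N.log2 with ha
    have h2a : 2^a ≤ N := Nat.log2_self_le hN
    have h2a' : N < 2^(a+1) := Nat.lt_log2_self
    set r := N - 2^a with hrdef
    have hNr : N = 2^a + r := by omega
    have hr : r ≤ 2^a := by
      have : 2^(a+1) = 2^a + 2^a := by ring
      omega
    have hrR : (r:ℝ) ≤ (2^a:ℕ) := by exact_mod_cast hr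
    have hsplit := vcount_split a r hr α
    have hbase := vcount_pow_err a α h0 h1
    have hhalf : (2^a:ℕ) * (1/2:ℝ)^(a+1) = 1/2 := by
      push_cast
      rw [div_pow, one_pow, pow_succ]
      field_simp
    set α' := α - (1/2:ℝ)^(a+1) with hα'
    have hNcast : ((N:ℕ):ℝ) * α = ((2^a:ℕ):ℝ) * α + (r:ℝ) * α := by
      rw [hNr]; push_cast; ring
    have hshift_pos : (0:ℝ) < (1/2:ℝ)^(a+1) := by positivity
    clear_value a r α'
    rcases lt_or_ge α' 0 with hneg | hα'0
    · have hz : vcount r α' = 0 := vcount_nonpos _ _ hneg.le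
      have hra : (r:ℝ) * α ≤ 1/2 := by
        have : α < (1/2:ℝ)^(a+1) := by rw [hα', sub_neg] at hneg; exact hneg
        calc (r:ℝ) * α ≤ ((2^a:ℕ):ℝ) * α := by
              apply mul_le_mul_of_nonneg_right hrR h0
        _ ≤ ((2^a:ℕ):ℝ) * (1/2:ℝ)^(a+1) := by
              apply mul_le_mul_of_nonneg_left this.le (by positivity)
        _ = 1/2 := hhalf
      have hra0 : (0:ℝ) ≤ (r:ℝ) * α := by positivity
      rw [hNr, hsplit, hz]
      push_cast
      push_cast at hbase hNcast
      rw [abs_le] at hbase ⊢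
      constructor
      · have : (3:ℝ)/2 ≤ 3/2 * (a+1) := by
          have : (0:ℝ) ≤ a := Nat.cast_nonneg a
          nlinarith
        nlinarith [hbase.1, hbase.2]
      · nlinarith [hbase.1, hbase.2]
    · have hα'1 : α' ≤ 1 := by rw [hα']; linarith
      have hone : 1 ≤ 2^a := Nat.one_le_two_pow
      have hrN : r < N := by omega
      have hIH := ih r hrN α' hα'0 hα'1
      have hrs : (r:ℝ) * α - (r:ℝ) * α' ≤ 1/2 := by
        have h5 : (r:ℝ) * α - (r:ℝ) * α' = (r:ℝ) * (1/2:ℝ)^(a+1) := by rw [hα']; ring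
        rw [h5]
        calc (r:ℝ) * (1/2:ℝ)^(a+1) ≤ ((2^a:ℕ):ℝ) * (1/2:ℝ)^(a+1) :=
              mul_le_mul_of_nonneg_right hrR hshift_pos.le
        _ = 1/2 := hhalf
      have hrs0 : 0 ≤ (r:ℝ) * α - (r:ℝ) * α' := by
        have h5 : (r:ℝ) * α - (r:ℝ) * α' = (r:ℝ) * (1/2:ℝ)^(a+1) := by rw [hα']; ring
        rw [h5]; positivity
      rcases eq_or_ne r 0 with hr0 | hr0
      · rw [hNr, hsplit, hr0, vcount_zero]
        push_cast at hbase ⊢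
        rw [abs_le] at hbase ⊢
        have ha0 : (0:ℝ) ≤ (a:ℝ) := Nat.cast_nonneg a
        constructor <;> linarith [hbase.1, hbase.2]
      · have hr2 : r < 2^a := by
          have : 2^(a+1) = 2^a + 2^a := by ring
          omega
        have hlog : r.log2 + 1 ≤ a := by
          have := (Nat.log2_lt hr0).mpr hr2
          omega
        have hlogR : (r.log2:ℝ) + 1 ≤ (a:ℝ) := by exact_mod_cast hlog
        rw [hNr, hsplit]
        push_cast at hbase hIH ⊢
        rw [abs_le] at hbase hIH ⊢
        constructor <;> linarith [hbase.1, hbase.2, hIH.1, hIH.2]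

open MeasureTheory Set

noncomputable def cdf1 (μ : Measure ℝ) (b : ℝ) : ℝ := (μ (Set.Ico 0 b)).toReal

noncomputable def quant (μ : Measure ℝ) (p : ℝ) : ℝ :=
  sInf ({b | b ∈ Set.Icc (0:ℝ) 1 ∧ p < cdf1 μ b} ∪ {1})

lemma quantSet_nonempty (μ : Measure ℝ) (p : ℝ) :
    ({b | b ∈ Set.Icc (0:ℝ) 1 ∧ p < cdf1 μ b} ∪ {1}).Nonempty :=
  ⟨1, Or.inr rfl⟩

lemma quantSet_bdd (μ : Measure ℝ) (p : ℝ) :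
    BddBelow ({b | b ∈ Set.Icc (0:ℝ) 1 ∧ p < cdf1 μ b} ∪ {1}) := by
  refine ⟨0, fun t ht => ?_⟩
  rcases ht with ⟨⟨h0, _⟩, _⟩ | h
  · exact h0
  · simp only [mem_singleton_iff] at h
    rw [h]; norm_num

lemma quant_mem (μ : Measure ℝ) (p : ℝ) : quant μ p ∈ Set.Icc (0:ℝ) 1 := by
  constructor
  · apply le_csInf (quantSet_nonempty μ p)
    intro t ht
    rcases ht with ⟨⟨h0, _⟩, _⟩ | h
    · exact h0
    · simp only [mem_singleton_iff] at h
      rw [h]; norm_num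
  · exact csInf_le (quantSet_bdd μ p) (Or.inr rfl)

lemma cdf1_mono (μ : Measure ℝ) [IsFiniteMeasure μ] {b b' : ℝ} (h : b ≤ b') :
    cdf1 μ b ≤ cdf1 μ b' :=
  ENNReal.toReal_mono (measure_ne_top μ _) (measure_mono (Set.Ico_subset_Ico_right h))

lemma cdf1_nonneg (μ : Measure ℝ) (b : ℝ) : 0 ≤ cdf1 μ b := ENNReal.toReal_nonneg

lemma quant_lt_iff (μ : Measure ℝ) [IsFiniteMeasure μ] {p b : ℝ} (hp : 0 ≤ p)
    (hb : b ∈ Set.Icc (0:ℝ) 1) : quant μ p < b ↔ p < cdf1 μ b := by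
  constructor
  · intro h
    obtain ⟨t, ht, htb⟩ := exists_lt_of_csInf_lt (quantSet_nonempty μ p) h
    rcases ht with ⟨_, hpt⟩ | h1
    · exact lt_of_lt_of_le hpt (cdf1_mono μ htb.le)
    · simp only [mem_singleton_iff] at h1
      subst h1
      exact absurd hb.2 (not_le.mpr htb)
  · intro h
    have hb0 : 0 < b := by
      by_contra hc
      push_neg at hc
      have : Set.Ico (0:ℝ) b = ∅ := Set.Ico_eq_empty (not_lt.mpr hc)
      rw [cdf1, this] at h
      simp at h
      linarith
    -- approximate from below
    set s : ℕ → Set ℝ := fun n => Set.Ico 0 (b - b/(n+1)) with hs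
    have hmono : Monotone s := by
      intro n m hnm
      apply Set.Ico_subset_Ico_right
      have hc : ((n:ℝ)+1) ≤ ((m:ℝ)+1) := by exact_mod_cast Nat.succ_le_succ hnm
      have : b/(m+1) ≤ b/(n+1) := div_le_div_of_nonneg_left hb0.le (by positivity) hc
      linarith
    have hU : ⋃ n, s n = Set.Ico 0 b := by
      ext y
      simp only [Set.mem_iUnion, hs, Set.mem_Ico]
      constructor
      · rintro ⟨n, h0, hlt⟩
        refine ⟨h0, lt_of_lt_of_le hlt ?_⟩
        have : 0 < b/((n:ℝ)+1) := div_pos hb0 (by positivity)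
        linarith
      · rintro ⟨h0, hlt⟩
        obtain ⟨n, hn⟩ := exists_nat_gt (b/(b-y))
        refine ⟨n, h0, ?_⟩
        have hby : 0 < b - y := by linarith
        have hn1 : b/(b-y) < (n:ℝ)+1 := by linarith
        have : b < (b-y)*((n:ℝ)+1) := by
          rw [div_lt_iff₀ hby] at hn1
          linarith
        have hpos : (0:ℝ) < (n:ℝ)+1 := by positivity
        rw [lt_sub_iff_add_lt, ← lt_sub_iff_add_lt']
        rw [div_lt_iff₀ hpos]
        nlinarith
    have htend : Filter.Tendsto (fun n : ℕ => cdf1 μ (b - b/(n+1))) Filter.atTop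
        (nhds (cdf1 μ b)) := by
      have h1 := MeasureTheory.tendsto_measure_iUnion_atTop (μ := μ) hmono
      rw [hU] at h1
      have h2 := (ENNReal.tendsto_toReal (measure_ne_top μ (Set.Ico 0 b))).comp h1
      simp only [Function.comp_def, hs] at h2
      unfold cdf1
      exact h2
    obtain ⟨n, hn⟩ := ((tendsto_order.1 htend).1 p h).exists
    have ht1 : b - b/(n+1) ∈ Set.Icc (0:ℝ) 1 := by
      constructor
      · have h1n : (1:ℝ) ≤ (n:ℝ)+1 := by exact_mod_cast Nat.succ_le_succ (Nat.zero_le n)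
        have : b/((n:ℝ)+1) ≤ b/1 := div_le_div_of_nonneg_left hb0.le one_pos h1n
        simp at this
        linarith
      · have : 0 < b/((n:ℝ)+1) := div_pos hb0 (by positivity)
        linarith [hb.2]
    have hlt : b - b/(n+1) < b := by
      have : 0 < b/((n:ℝ)+1) := div_pos hb0 (by positivity)
      linarith
    calc quant μ p ≤ b - b/(n+1) := csInf_le (quantSet_bdd μ p) (Or.inl ⟨ht1, hn⟩)
    _ < b := hlt

open scoped ENNReal


lemma emp1_apply (μ : Measure ℝ) [IsProbabilityMeasure μ] (N : ℕ) (hN : 0 < N)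
    {b : ℝ} (hb : b ∈ Set.Icc (0:ℝ) 1) :
    ((emp1 N (fun i => quant μ (vdc i))) (Set.Ico 0 b)).toReal
      = (vcount N (cdf1 μ b) : ℝ) / N := by
  classical
  rw [emp1, Measure.smul_apply, smul_eq_mul,
    Measure.finset_sum_apply]
  have hsum : ∑ i ∈ Finset.range N, Measure.dirac (quant μ (vdc i)) (Set.Ico 0 b)
      = (vcount N (cdf1 μ b) : ℝ≥0∞) := by
    rw [Finset.sum_congr rfl (fun i _ => Measure.dirac_apply' _ measurableSet_Ico)]
    have : ∀ i, Set.indicator (Set.Ico 0 b) (1 : ℝ → ℝ≥0∞) (quant μ (vdc i))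
        = if vdc i < cdf1 μ b then 1 else 0 := by
      intro i
      rw [Set.indicator_apply]
      congr 1
      simp only [Set.mem_Ico, eq_iff_iff]
      constructor
      · intro h
        exact (quant_lt_iff μ (vdc_nonneg i) hb).mp h.2
      · intro h
        exact ⟨(quant_mem μ (vdc i)).1, (quant_lt_iff μ (vdc_nonneg i) hb).mpr h⟩
    rw [Finset.sum_congr rfl (fun i _ => this i), Finset.sum_boole, vcount]
  rw [hsum, ENNReal.toReal_mul, ENNReal.toReal_inv, ENNReal.toReal_natCast, ENNReal.toReal_natCast,
    inv_mul_eq_div]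

lemma log2_bound (N : ℕ) (hN : 2 ≤ N) :
    (3/2) * ((N.log2:ℝ) + 1) ≤ 3 / Real.log 2 * Real.log N := by
  have hlog2pos : (0:ℝ) < Real.log 2 := Real.log_pos (by norm_num)
  have l1 : 1 ≤ N.log2 := (Nat.le_log2 (by omega)).mpr (by simpa using hN)
  have l1R : (1:ℝ) ≤ (N.log2:ℝ) := by exact_mod_cast l1
  have h2 : ((2:ℕ)^(N.log2) : ℝ) ≤ (N:ℝ) := by exact_mod_cast Nat.log2_self_le (by omega)
  have h3 : (N.log2:ℝ) * Real.log 2 ≤ Real.log N := by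
    have := Real.log_le_log (by positivity) h2
    rwa [Real.log_pow, Nat.cast_ofNat] at this
  rw [div_mul_eq_mul_div 3 (Real.log 2) (Real.log N), le_div_iff₀ hlog2pos]
  nlinarith


/-- For every Borel probability measure `μ` on `[0,1]` there exist a sequence `(x_k)` in
`[0,1]` and a constant `c > 0` such that for all `N ≥ 2` the empirical measure `ν_N` of
the first `N` terms satisfies `D*_N(μ; ν_N) ≤ c log N / N`. -/
theorem stmt13 (μ : Measure ℝ) [IsProbabilityMeasure μ]
    (hμ : μ ((Icc (0 : ℝ) 1)ᶜ) = 0) :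
    ∃ x : ℕ → ℝ, ∃ c : ℝ, 0 < c ∧ (∀ k, x k ∈ Icc (0 : ℝ) 1) ∧
      ∀ N : ℕ, 2 ≤ N →
        starDisc μ (emp1 N x) ≤ c * Real.log N / N := by
  have hlog2pos : (0:ℝ) < Real.log 2 := Real.log_pos (by norm_num)
  refine ⟨fun i => quant μ (vdc i), 3 / Real.log 2,
    div_pos (by norm_num) hlog2pos, fun k => quant_mem μ _, ?_⟩
  intro N hN
  haveI : Nonempty (Set.Icc (0:ℝ) 1) := ⟨⟨0, by norm_num⟩⟩
  have hNR : (0:ℝ) < N := by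
    have : 0 < N := by omega
    exact_mod_cast this
  rw [starDisc]
  apply ciSup_le
  rintro ⟨b, hb⟩
  have hemp := emp1_apply μ N (by omega) hb
  simp only at hemp ⊢
  rw [hemp]
  have hcdf_le : cdf1 μ b ≤ 1 := by
    have h := prob_le_one (μ := μ) (s := Set.Ico 0 b)
    have := ENNReal.toReal_mono ENNReal.one_ne_top h
    simpa [cdf1] using this
  have herr := vcount_err N (cdf1 μ b) (cdf1_nonneg μ b) hcdf_le
  have hfirst : (μ (Set.Ico 0 b)).toReal = cdf1 μ b := rfl
  rw [hfirst]
  set k : ℕ := vcount N (cdf1 μ b) with hk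
  have habs : |cdf1 μ b - (k:ℝ)/N| = |(k:ℝ) - N * cdf1 μ b| / N := by
    have h5 : (k:ℝ)/N - cdf1 μ b = ((k:ℝ) - N * cdf1 μ b)/N := by field_simp
    rw [abs_sub_comm, h5, abs_div, abs_of_pos hNR]
  rw [habs]
  have hnum := log2_bound N hN
  calc |(k:ℝ) - N * cdf1 μ b| / N ≤ (3/2) * ((N.log2:ℝ) + 1) / N :=
        (div_le_div_iff_of_pos_right hNR).mpr herr
  _ ≤ 3 / Real.log 2 * Real.log N / N := (div_le_div_iff_of_pos_right hNR).mpr hnum
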